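/- Networks 1 and 2 imply the conditional independency Y_{b_0} ⊥⊥ Y_{b_0'} | Y_{A_0} if and only if the following implication holds: every tuple of discrete, finitely supported random variables V_1,…,V_n such that (V_i)_{i∈C_1} are mutually independent, (V_i)_{i∈C_2} are mutually independent, and V_{b_j} ≤ι V_{A_j} for j = 1,…,k, satisfies V_{b_0} ≤ι V_{A_0}. -/

import Mathlib

namespace Paper

/-- The probability of an event under a probability mass function. -/
noncomputable def pr {Ω : Type} (μ : PMF Ω) (E : Set Ω) : ENNReal :=
  μ.toOuterMeasure E

/-- Conditional independence `X ⊥⊥ Y | Z`: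
`p(x,y,z) p(z) = p(x,z) p(y,z)` for all `x, y, z`. -/
def CondIndep {Ω α β γ : Type} (μ : PMF Ω) (X : Ω → α) (Y : Ω → β) (Z : Ω → γ) : Prop :=
  ∀ (x : α) (y : β) (z : γ),
    pr μ {ω | X ω = x ∧ Y ω = y ∧ Z ω = z} * pr μ {ω | Z ω = z}
      = pr μ {ω | X ω = x ∧ Z ω = z} * pr μ {ω | Y ω = y ∧ Z ω = z}

/-- Unconditional independence `X ⊥⊥ Y`. -/
def Indep {Ω α β : Type} (μ : PMF Ω) (X : Ω → α) (Y : Ω → β) : Prop :=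
  ∀ (x : α) (y : β),
    pr μ {ω | X ω = x ∧ Y ω = y} = pr μ {ω | X ω = x} * pr μ {ω | Y ω = y}

/-- `X ≥ι Y`: `X` functionally determines `Y` (with probability one). -/
def FunDep {Ω α β : Type} (μ : PMF Ω) (X : Ω → α) (Y : Ω → β) : Prop :=
  ∃ f : α → β, ∀ ω ∈ μ.support, Y ω = f (X ω)

/-- `X =ι Y`: informational equivalence. -/
def InfoEq {Ω α β : Type} (μ : PMF Ω) (X : Ω → α) (Y : Ω → β) : Prop :=
  FunDep μ X Y ∧ FunDep μ Y X

/-- The random variable `X` has finite support. -/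
def FinSupp {Ω α : Type} (μ : PMF Ω) (X : Ω → α) : Prop :=
  (X '' μ.support).Finite

/-- The random variable `X` has support of cardinality at most `ℓ`. -/
def CardLE {Ω α : Type} (μ : PMF Ω) (X : Ω → α) (ℓ : ℕ) : Prop :=
  ∃ s : Finset α, s.card ≤ ℓ ∧ ∀ ω ∈ μ.support, X ω ∈ s

/-- `X` is uniformly distributed with support of cardinality `ℓ`. -/
def UniformCard {Ω α : Type} (μ : PMF Ω) (X : Ω → α) (ℓ : ℕ) : Prop :=
  ∃ S : Finset α, S.card = ℓ ∧ (∀ x ∈ S, pr μ {ω | X ω = x} = (ℓ : ENNReal)⁻¹) ∧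
    ∀ x, x ∉ S → pr μ {ω | X ω = x} = 0

/-- The probability mass function of the random variable `X`. -/
noncomputable def distOf {Ω α : Type} (μ : PMF Ω) (X : Ω → α) : α → ENNReal :=
  fun x => pr μ {ω | X ω = x}

/-- `p ⪰ q` : `p` majorizes `q`, i.e. for every `k`, the sum of the `k` largest values
of `p` is at least the sum of the `k` largest values of `q`. -/
def Majorizes (p q : ℕ → ENNReal) : Prop :=
  ∀ s : Finset ℕ, ∃ t : Finset ℕ, t.card ≤ s.card ∧ ∑ x ∈ s, q x ≤ ∑ x ∈ t, p x

/-- `T` is a sufficient statistic of `X` for `U`: `X ≥ι T` and `U ⊥⊥ X | T`. -/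
def SuffStat {Ω α β γ : Type} (μ : PMF Ω) (X : Ω → α) (U : Ω → β) (T : Ω → γ) : Prop :=
  FunDep μ X T ∧ CondIndep μ U X T

/-- `T` is a minimal sufficient statistic of `X` for `U`. -/
def MinSuffStat {Ω α β γ : Type} (μ : PMF Ω) (X : Ω → α) (U : Ω → β) (T : Ω → γ) : Prop :=
  SuffStat μ X U T ∧
    ∀ (δ : Type) (T' : Ω → δ), SuffStat μ X U T' → FunDep μ T' T

/-- Mutual independence of the subfamily `(V i)_{i ∈ s}`: each `V i` (for `i ∈ s`) is
independent of the joint variable of the others. -/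
def MutIndepOn {Ω ι : Type} {β : ι → Type} (μ : PMF Ω) (V : ∀ i, Ω → β i)
    (s : Finset ι) : Prop :=
  ∀ i ∈ s, Indep μ (V i) (fun ω => fun j : {j // j ∈ s ∧ j ≠ i} => V j.1 ω)

/-- Mutual independence of the whole family `(V i)_i`. -/
def MutIndep {Ω ι : Type} {β : ι → Type} (μ : PMF Ω) (V : ∀ i, Ω → β i) : Prop :=
  ∀ i, Indep μ (V i) (fun ω => fun j : {j // j ≠ i} => V j.1 ω)

/-- Mutual independence of `(V i)_{i ∈ C}` for a list `C` of indices. -/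
def MutIndepL {Ω : Type} (μ : PMF Ω) (V : ℕ → Ω → ℕ) (C : List ℕ) : Prop :=
  ∀ i ∈ C, Indep μ (V i) (fun ω => fun j : {j // j ∈ C ∧ j ≠ i} => V j.1 ω)

/-- The joint random variable `(X a)_{a ∈ A}` for a list `A` of indices. -/
def jointOn {Ω : Type} (X : ℕ → Ω → ℕ) (A : List ℕ) : Ω → ({a : ℕ // a ∈ A} → ℕ) :=
  fun ω a => X a.1 ω

/-- The joint random variable `(T i)_{i ∈ S}` for a finset `S` of indices. -/
def jointFin {Ω ι : Type} {β : ι → Type} (T : ∀ i, Ω → β i) (S : Finset ι) :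
    Ω → ((i : {i // i ∈ S}) → β i.1) :=
  fun ω i => T i.1 ω

/-- The set of parents (in-neighbours) of `w` in the directed graph with edge relation `E`. -/
def parentSet {ν : Type} (E : ν → ν → Prop) (w : ν) : Set ν := {v | E v w}

/-- The set of nodes that are neither descendants nor parents of `w`. -/
def nonDescSet {ν : Type} (E : ν → ν → Prop) (w : ν) : Set ν :=
  {v | ¬ Relation.ReflTransGen E w v ∧ ¬ E v w}

/-- The collection of random variables `(X v)_v` satisfies the Bayesian network structure
with edge relation `E`: each variable is conditionally independent of its
non-descendant non-parent variables given its parent variables. -/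
def SatisfiesBN {Ω ν : Type} {β : ν → Type} (μ : PMF Ω) (X : ∀ v, Ω → β v)
    (E : ν → ν → Prop) : Prop :=
  ∀ w : ν, CondIndep μ (X w)
    (fun ω => fun v : nonDescSet E w => X v.1 ω)
    (fun ω => fun v : parentSet E w => X v.1 ω)

/-- `E` is (the edge list of) a directed acyclic graph on the nodes `{0, …, n-1}`. -/
def IsDAG (n : ℕ) (E : List (ℕ × ℕ)) : Prop :=
  (∀ e ∈ E, e.1 < n ∧ e.2 < n) ∧
    ∀ i : ℕ, ¬ Relation.TransGen (fun a c => (a, c) ∈ E) i i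

/-- The edge relation on `Fin n` determined by an edge list. -/
def edgeRelOn (n : ℕ) (E : List (ℕ × ℕ)) : Fin n → Fin n → Prop :=
  fun i j => ((i : ℕ), (j : ℕ)) ∈ E

/-- `(X_0, …, X_{n-1})` satisfies the Bayesian network given by the edge list `E`. -/
def SatisfiesBNn {Ω : Type} (μ : PMF Ω) (n : ℕ) (X : ℕ → Ω → ℕ)
    (E : List (ℕ × ℕ)) : Prop :=
  SatisfiesBN μ (fun i : Fin n => X (i : ℕ)) (edgeRelOn n E)

/-- `(A, C, B) ∈ I(G_1, …, G_m)`: every collection of finitely supported discrete random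
variables satisfying all the network structures in `Gs` satisfies `X_A ⊥⊥ X_B | X_C`. -/
def ImpliedCI (n : ℕ) (Gs : List (List (ℕ × ℕ))) (A C B : List ℕ) : Prop :=
  ∀ (Ω : Type) (μ : PMF Ω) (X : ℕ → Ω → ℕ),
    (∀ i, i < n → FinSupp μ (X i)) →
    (∀ G ∈ Gs, SatisfiesBNn μ n X G) →
    CondIndep μ (jointOn X A) (jointOn X B) (jointOn X C)

/-- Two lists are disjoint as sets. -/
def DisjointL (A B : List ℕ) : Prop := ∀ a ∈ A, a ∉ B

end Paper
namespace Paper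

/-- The nodes of the two networks: `u i = U_i`, `y i = Y_i`, `z i = Z_i`,
`x i j = X_i^j`. -/
inductive BNode (n k : ℕ) : Type
  | u : Fin n → BNode n k
  | y : Fin n → BNode n k
  | z : Fin n → BNode n k
  | x : Fin n → Fin k → BNode n k

/-- Edge relation of Network 1: `U_i → U_{i'}` for `i ∈ C1, i' ∉ C1` and for
`i, i' ∉ C1` with `i < i'`; and `U_i → Y_i → X_i^1 → ⋯ → X_i^k → Z_i`. -/
def edge1 (n k : ℕ) (C1 : Finset (Fin n)) : BNode n k → BNode n k → Prop :=
  fun v w => match v, w with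
  | .u i, .u i' => (i ∈ C1 ∧ i' ∉ C1) ∨ (i ∉ C1 ∧ i' ∉ C1 ∧ i < i')
  | .u i, .y i' => i = i'
  | .y i, .x i' j => i = i' ∧ (j : ℕ) = 0
  | .x i j, .x i' j' => i = i' ∧ (j' : ℕ) = (j : ℕ) + 1
  | .x i j, .z i' => i = i' ∧ (j : ℕ) = k - 1
  | _, _ => False

/-- Edge relation of Network 2: `U_i → U_{i'}` for `i ∈ C2, i' ∉ C2` and for
`i, i' ∉ C2` with `i < i'`; `U_i → Z_i → Y_i`; `U_i → X_i^j` for `i ≠ b j`; and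
`X_i^j → X_{b_j}^j` for `i ∈ A j`. -/
def edge2 (n k : ℕ) (C2 : Finset (Fin n)) (A : Fin k → Finset (Fin n))
    (b : Fin k → Fin n) : BNode n k → BNode n k → Prop :=
  fun v w => match v, w with
  | .u i, .u i' => (i ∈ C2 ∧ i' ∉ C2) ∨ (i ∉ C2 ∧ i' ∉ C2 ∧ i < i')
  | .u i, .z i' => i = i'
  | .z i, .y i' => i = i'
  | .u i, .x i' j => i = i' ∧ i' ≠ b j
  | .x i j, .x i' j' => j = j' ∧ i' = b j ∧ i ∈ A j
  | _, _ => False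

/-- The joint random variable `U = (U_1, …, U_n)`. -/
def Ujoint {Ω : Type} {n k : ℕ} (X : BNode n k → Ω → ℕ) : Ω → (Fin n → ℕ) :=
  fun ω i => X (.u i) ω

/-- The joint random variable `((X_i^j)_{j=1}^k, Y_i, Z_i)`. -/
def tupleVar {Ω : Type} {n k : ℕ} (X : BNode n k → Ω → ℕ) (i : Fin n) :
    Ω → ((Fin k → ℕ) × ℕ × ℕ) :=
  fun ω => (fun j => X (.x i j) ω, X (.y i) ω, X (.z i) ω)

end Paper

/-!
If the networks imply the independency: given `V` as in the implication, give every node of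
index `i` the variable `V_i`. Mutual independence on `C1` and on `C2` and the dependences
`V_{b_j} ≤ι V_{A_j}` make both local Markov conditions hold, so `V_{b₀} ⊥⊥ V_{b₀'} | V_{a₀}`;
since `V_{b₀} ≤ι V_{b₀'}` (the entry `({b₀'}, b₀)`), this forces `V_{b₀} ≤ι V_{a₀}`.

Conversely, given variables satisfying both networks, let `V_i` be the posterior class of `Y_i`
for `U = (U_1, …, U_n)`, a minimal sufficient statistic. Network 1 makes every chain
`U → Y_i → X_i^1 → ⋯ → Z_i` Markov, and the chains conditionally independent given `U`; together
with network 2 this gives `U ⊥⊥ Y_i | X_i^j`, so `V_i` is a function of every `X_i^j`. Hence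
`V_{b_j}` is a function both of `U` and of `(X_a^j)_{a ∈ A_j}`, and therefore of `V_{A_j}`, while
the edges among the `U_i` make the `Y_i`, hence the `V_i`, mutually independent on `C1` and on
`C2`. The implication yields `V_{b₀} ≤ι V_{a₀}`, and sufficiency of `V_{b₀}` turns
`Y_{b₀} ⊥⊥ (Y_{b₀'}, Y_{a₀}) | U` into `Y_{b₀} ⊥⊥ Y_{b₀'} | Y_{a₀}`.
-/

namespace Paper

section Probability

variable {Ω α β : Type} {μ : PMF Ω}

lemma pr_mono {E F : Set Ω} (h : E ⊆ F) : pr μ E ≤ pr μ F :=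
  μ.toOuterMeasure.mono h

lemma pr_ne_top (μ : PMF Ω) (E : Set Ω) : pr μ E ≠ ⊤ := by
  rw [pr, PMF.toOuterMeasure_apply]
  exact μ.tsum_coe_indicator_ne_top E

lemma pr_univ (μ : PMF Ω) : pr μ Set.univ = 1 :=
  (PMF.toOuterMeasure_apply_eq_one_iff μ _).mpr (Set.subset_univ _)

lemma pr_eq_zero_iff {E : Set Ω} : pr μ E = 0 ↔ ∀ ω ∈ μ.support, ω ∉ E := by
  rw [pr, PMF.toOuterMeasure_apply_eq_zero_iff, Set.disjoint_left]

lemma pr_eq_zero_of_subset {E F : Set Ω} (h : E ⊆ F) (hF : pr μ F = 0) : pr μ E = 0 :=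
  le_antisymm (hF ▸ pr_mono h) zero_le

lemma pr_ne_zero_of_mem {E : Set Ω} {ω : Ω} (hω : ω ∈ μ.support) (hE : ω ∈ E) :
    pr μ E ≠ 0 :=
  fun h => pr_eq_zero_iff.mp h ω hω hE

lemma exists_mem_support_of_pr_ne_zero {E : Set Ω} (h : pr μ E ≠ 0) :
    ∃ ω ∈ μ.support, ω ∈ E := by
  contrapose! h
  exact pr_eq_zero_iff.mpr h

lemma pr_congr {E F : Set Ω} (h : ∀ ω ∈ μ.support, ω ∈ E ↔ ω ∈ F) : pr μ E = pr μ F :=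
  PMF.toOuterMeasure_apply_eq_of_inter_support_eq μ <| Set.ext fun ω =>
    ⟨fun ⟨hE, hω⟩ => ⟨(h ω hω).mp hE, hω⟩, fun ⟨hF, hω⟩ => ⟨(h ω hω).mpr hF, hω⟩⟩

lemma pr_eq_tsum_inter (μ : PMF Ω) (f : Ω → α) (E : Set Ω) :
    pr μ E = ∑' a, pr μ (E ∩ {ω | f ω = a}) := by
  simp only [pr, PMF.toOuterMeasure_apply]
  rw [ENNReal.tsum_comm]
  refine tsum_congr fun ω => ?_
  rw [tsum_eq_single (f ω) fun a ha => Set.indicator_of_notMem (fun h => ha h.2.symm) μ]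
  by_cases hE : ω ∈ E <;> simp [hE]

open scoped Classical in
lemma pr_eq_tsum_fiber {X : Ω → α} {X' : Ω → β} {φ : α → β}
    (hφ : ∀ ω ∈ μ.support, X' ω = φ (X ω)) (x' : β) (P : Ω → Prop) :
    pr μ {ω | X' ω = x' ∧ P ω}
      = ∑' x, if φ x = x' then pr μ {ω | X ω = x ∧ P ω} else 0 := by
  rw [pr_eq_tsum_inter μ X]
  refine tsum_congr fun x => ?_
  split_ifs with hx
  · refine pr_congr fun ω hω => ?_
    simp only [Set.mem_inter_iff, Set.mem_ofPred_eq, hφ ω hω]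
    constructor
    · rintro ⟨⟨-, hP⟩, hX⟩
      exact ⟨hX, hP⟩
    · rintro ⟨hX, hP⟩
      exact ⟨⟨by rw [hX, hx], hP⟩, hX⟩
  · exact pr_eq_zero_iff.mpr fun ω hω ⟨⟨h1, _⟩, h2⟩ => hx (by rw [← h1, hφ ω hω, h2])

end Probability

section FunDep

variable {Ω α β γ δ : Type} {μ : PMF Ω}

lemma funDep_iff {W : Ω → α} {V : Ω → β} :
    FunDep μ W V ↔ ∀ ω ∈ μ.support, ∀ ω' ∈ μ.support, W ω = W ω' → V ω = V ω' := by
  refine ⟨fun ⟨f, hf⟩ ω hω ω' hω' h => by rw [hf ω hω, hf ω' hω', h], fun h => ?_⟩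
  classical
  obtain ⟨ω₀, -⟩ := μ.support_nonempty
  refine ⟨fun w => if hw : ∃ ω ∈ μ.support, W ω = w then V hw.choose else V ω₀,
    fun ω hω => ?_⟩
  have hex : ∃ ω' ∈ μ.support, W ω' = W ω := ⟨ω, hω, rfl⟩
  simp only [dif_pos hex]
  exact h ω hω _ hex.choose_spec.1 hex.choose_spec.2.symm

lemma funDep_comp (W : Ω → α) (f : α → β) : FunDep μ W (fun ω => f (W ω)) :=
  ⟨f, fun _ _ => rfl⟩

lemma funDep_refl (W : Ω → α) : FunDep μ W W := funDep_comp W id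

lemma FunDep.trans {W : Ω → α} {V : Ω → β} {T : Ω → γ} (h₁ : FunDep μ W V)
    (h₂ : FunDep μ V T) : FunDep μ W T := by
  obtain ⟨f, hf⟩ := h₁
  obtain ⟨g, hg⟩ := h₂
  exact ⟨g ∘ f, fun ω hω => by rw [hg ω hω, hf ω hω, Function.comp_apply]⟩

lemma funDep_pi {ι : Type} {β : ι → Type} {W : Ω → α} {V : ∀ i, Ω → β i}
    (h : ∀ i, FunDep μ W (V i)) : FunDep μ W (fun ω i => V i ω) := by
  choose f hf using h
  exact ⟨fun w i => f i w, fun ω hω => funext fun i => hf i ω hω⟩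

lemma FunDep.pair {W : Ω → α} {V : Ω → β} {T : Ω → γ} (hV : FunDep μ W V)
    (hT : FunDep μ W T) : FunDep μ W (fun ω => (V ω, T ω)) := by
  obtain ⟨f, hf⟩ := hV
  obtain ⟨g, hg⟩ := hT
  exact ⟨fun w => (f w, g w), fun ω hω => by simp only [hf ω hω, hg ω hω]⟩

end FunDep

section CondIndep

variable {Ω α β γ δ : Type} {μ : PMF Ω} {X : Ω → α} {Y : Ω → β} {Z : Ω → γ}

lemma CondIndep.symm (h : CondIndep μ X Y Z) : CondIndep μ Y X Z := by
  intro y x z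
  rw [show {ω | Y ω = y ∧ X ω = x ∧ Z ω = z} = {ω | X ω = x ∧ Y ω = y ∧ Z ω = z} from
    Set.ext fun _ => and_left_comm, h x y z, mul_comm]

open scoped Classical in
lemma CondIndep.comp_left {X' : Ω → δ} (h : CondIndep μ X Y Z) (hX : FunDep μ X X') :
    CondIndep μ X' Y Z := by
  obtain ⟨φ, hφ⟩ := hX
  intro x' y z
  rw [pr_eq_tsum_fiber hφ x' (fun ω => Y ω = y ∧ Z ω = z),
    pr_eq_tsum_fiber hφ x' (fun ω => Z ω = z), ← ENNReal.tsum_mul_right,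
    ← ENNReal.tsum_mul_right]
  refine tsum_congr fun x => ?_
  split_ifs
  · exact h x y z
  · rw [zero_mul, zero_mul]

lemma CondIndep.comp_right {Y' : Ω → δ} (h : CondIndep μ X Y Z) (hY : FunDep μ Y Y') :
    CondIndep μ X Y' Z :=
  (h.symm.comp_left hY).symm

lemma CondIndep.congr_cond {Z' : Ω → δ} (h : CondIndep μ X Y Z) (hZ : InfoEq μ Z Z') :
    CondIndep μ X Y Z' := by
  obtain ⟨⟨φ, hφ⟩, ⟨ψ, hψ⟩⟩ := hZ
  intro x y z'
  by_cases hz' : ∃ ω₀ ∈ μ.support, Z' ω₀ = z'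
  · obtain ⟨ω₀, hω₀, rfl⟩ := hz'
    have key : ∀ ω ∈ μ.support, Z' ω = Z' ω₀ ↔ Z ω = ψ (Z' ω₀) := fun ω hω =>
      ⟨fun h => by rw [hψ ω hω, h], fun h => by rw [hφ ω hω, h, ← hψ ω₀ hω₀, ← hφ ω₀ hω₀]⟩
    have e : ∀ P : Ω → Prop, pr μ {ω | P ω ∧ Z' ω = Z' ω₀}
        = pr μ {ω | P ω ∧ Z ω = ψ (Z' ω₀)} := fun P =>
      pr_congr fun ω hω => and_congr_right' (key ω hω)
    have e₀ : pr μ {ω | Z' ω = Z' ω₀} = pr μ {ω | Z ω = ψ (Z' ω₀)} :=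
      pr_congr fun ω hω => key ω hω
    have e₃ : pr μ {ω | X ω = x ∧ Y ω = y ∧ Z' ω = Z' ω₀}
        = pr μ {ω | X ω = x ∧ Y ω = y ∧ Z ω = ψ (Z' ω₀)} := by
      simpa only [and_assoc] using e (fun ω => X ω = x ∧ Y ω = y)
    rw [e₃, e₀, e, e]
    exact h x y _
  · push Not at hz'
    have hzero : ∀ P : Ω → Prop, pr μ {ω | P ω ∧ Z' ω = z'} = 0 := fun P =>
      pr_eq_zero_iff.mpr fun ω hω hm => hz' ω hω hm.2
    have e₃ : pr μ {ω | X ω = x ∧ Y ω = y ∧ Z' ω = z'} = 0 := by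
      simpa only [and_assoc] using hzero (fun ω => X ω = x ∧ Y ω = y)
    rw [e₃, hzero, zero_mul, zero_mul]

lemma condIndep_of_funDep_right (h : FunDep μ Z Y) : CondIndep μ X Y Z := by
  obtain ⟨f, hf⟩ := h
  intro x y z
  by_cases hy : f z = y
  · have e : ∀ P : Ω → Prop, pr μ {ω | P ω ∧ Y ω = y ∧ Z ω = z} = pr μ {ω | P ω ∧ Z ω = z} :=
      fun P => pr_congr fun ω hω => by
        simp only [Set.mem_ofPred_eq]
        exact ⟨fun h => ⟨h.1, h.2.2⟩, fun h => ⟨h.1, by rw [hf ω hω, h.2, hy], h.2⟩⟩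
    have e' := e (fun _ => True)
    simp only [true_and] at e'
    rw [e, e', mul_comm]
  · have hzero : ∀ P : Ω → Prop, pr μ {ω | P ω ∧ Y ω = y ∧ Z ω = z} = 0 := fun P =>
      pr_eq_zero_iff.mpr fun ω hω h => hy (by rw [← h.2.2, ← hf ω hω, h.2.1])
    have e' := hzero (fun _ => True)
    simp only [true_and] at e'
    rw [hzero, e', zero_mul, mul_zero]

lemma condIndep_of_funDep_left (h : FunDep μ Z X) : CondIndep μ X Y Z :=
  (condIndep_of_funDep_right h).symm

lemma condIndep_iff_indep_of_const (hZ : ∀ ω ω', Z ω = Z ω') :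
    CondIndep μ X Y Z ↔ Indep μ X Y := by
  obtain ⟨ω₀, -⟩ := μ.support_nonempty
  have hz : ∀ z ω, Z ω = z ↔ Z ω₀ = z := fun z ω => by rw [hZ ω ω₀]
  refine ⟨fun h x y => ?_, fun h x y z => ?_⟩
  · have := h x y (Z ω₀)
    simp only [hz, and_true, Set.ofPred_true, pr_univ, mul_one] at this
    exact this
  · simp only [hz]
    by_cases hc : Z ω₀ = z
    · simp only [hc, and_true, Set.ofPred_true, pr_univ, mul_one]
      exact h x y
    · simp [hc]

lemma mul_eq_mul_of_cross {a b c d e f : ENNReal} (he : e ≠ ⊤)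
    (h₀ : e = 0 → a = 0 ∧ (d = 0 ∨ c = 0)) (h₁ : a * e = b * c) (h₂ : d * e = b * f) :
    a * f = d * c := by
  rcases eq_or_ne e 0 with he₀ | he₀
  · obtain ⟨ha, hd | hc⟩ := h₀ he₀ <;> simp [*]
  · rw [← ENNReal.mul_left_inj he₀ he]
    calc a * f * e = a * e * f := by ring
      _ = b * f * c := by rw [h₁]; ring
      _ = d * c * e := by rw [← h₂]; ring

lemma CondIndep.weak_union {W : Ω → δ} (h : CondIndep μ X (fun ω => (Y ω, W ω)) Z) :
    CondIndep μ X Y (fun ω => (Z ω, W ω)) := by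
  rintro x y ⟨z, w⟩
  have h₁ := h x (y, w) z
  have h₂ := (h.comp_right (funDep_comp _ Prod.snd)) x w z
  simp only [Prod.mk.injEq, and_comm, and_left_comm] at h₁ h₂ ⊢
  refine mul_eq_mul_of_cross (pr_ne_top μ _) (fun h₀ => ⟨?_, Or.inl ?_⟩) h₁ h₂ <;>
  exact pr_eq_zero_of_subset (fun ω hω => by simp only [Set.mem_ofPred_eq] at *; tauto) h₀

lemma CondIndep.contraction {W : Ω → δ} (h₁ : CondIndep μ X Y Z)
    (h₂ : CondIndep μ X W (fun ω => (Y ω, Z ω))) :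
    CondIndep μ X (fun ω => (Y ω, W ω)) Z := by
  rintro x ⟨y, w⟩ z
  have g₁ := h₁ x y z
  have g₂ := h₂ x w (y, z)
  simp only [Prod.mk.injEq, and_comm, and_left_comm, and_assoc] at g₁ g₂ ⊢
  refine mul_eq_mul_of_cross (pr_ne_top μ _) (fun h₀ => ⟨?_, Or.inr ?_⟩) g₂ g₁.symm <;>
  exact pr_eq_zero_of_subset (fun ω hω => by simp only [Set.mem_ofPred_eq] at *; tauto) h₀

lemma CondIndep.pr_ne_zero (h : CondIndep μ X Y Z) {x : α} {y : β} {z : γ}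
    (hx : pr μ {ω | X ω = x ∧ Z ω = z} ≠ 0) (hy : pr μ {ω | Y ω = y ∧ Z ω = z} ≠ 0) :
    pr μ {ω | X ω = x ∧ Y ω = y ∧ Z ω = z} ≠ 0 := by
  intro h₀
  have := h x y z
  rw [h₀, zero_mul] at this
  exact mul_ne_zero hx hy this.symm

lemma funDep_of_condIndep {V : Ω → δ} (h : CondIndep μ X Y Z) (hX : FunDep μ X V)
    (hY : FunDep μ Y V) : FunDep μ Z V := by
  rw [funDep_iff] at hX hY ⊢
  intro ω hω ω' hω' hZ
  obtain ⟨ω₁, hω₁, hX₁, hY₁, -⟩ := exists_mem_support_of_pr_ne_zero <|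
    h.pr_ne_zero (pr_ne_zero_of_mem hω ⟨rfl, rfl⟩) (pr_ne_zero_of_mem hω' ⟨rfl, hZ.symm⟩)
  exact (hX ω hω ω₁ hω₁ hX₁.symm).trans (hY ω₁ hω₁ ω' hω' hY₁)

lemma CondIndep.pair_cond (h : CondIndep μ X Y Z) : CondIndep μ X (fun ω => (Y ω, Z ω)) Z :=
  h.contraction (condIndep_of_funDep_right (funDep_comp _ Prod.snd))

lemma CondIndep.of_sufficient {W : Ω → δ} {T : Ω → γ} {U : Ω → β}
    (hW : CondIndep μ X W U) (hT : FunDep μ X T) (hsuff : CondIndep μ X U T) :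
    CondIndep μ X W T := by
  have h₁ : CondIndep μ W (fun ω => (X ω, T ω)) U :=
    hW.symm.comp_right ((funDep_refl X).pair hT)
  exact (hsuff.contraction h₁.weak_union.symm).comp_right (funDep_comp _ Prod.snd)

lemma indep_iff_condIndep_unit : Indep μ X Y ↔ CondIndep μ X Y (fun _ => ()) :=
  (condIndep_iff_indep_of_const fun _ _ => rfl).symm

lemma Indep.symm (h : Indep μ X Y) : Indep μ Y X :=
  indep_iff_condIndep_unit.mpr (indep_iff_condIndep_unit.mp h).symm

lemma Indep.comp_left {X' : Ω → δ} (h : Indep μ X Y) (hX : FunDep μ X X') : Indep μ X' Y :=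
  indep_iff_condIndep_unit.mpr ((indep_iff_condIndep_unit.mp h).comp_left hX)

lemma Indep.comp_right {Y' : Ω → δ} (h : Indep μ X Y) (hY : FunDep μ Y Y') :
    Indep μ X Y' :=
  (h.symm.comp_left hY).symm

end CondIndep

section Posterior

variable {Ω α β γ : Type} {μ : PMF Ω}

/-- The posterior of `U` given `Y = y`; identically `0` when `Y = y` is null. -/
noncomputable def posterior (μ : PMF Ω) (U : Ω → γ) (Y : Ω → α) (y : α) : γ → ENNReal :=
  fun u => pr μ {ω | Y ω = y ∧ U ω = u} / pr μ {ω | Y ω = y}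

variable {U : Ω → γ}

lemma posterior_ne_zero_iff {Y : Ω → α} {y : α} {u : γ} :
    posterior μ U Y y u ≠ 0 ↔ pr μ {ω | Y ω = y ∧ U ω = u} ≠ 0 := by
  simp [posterior, ENNReal.div_eq_zero_iff, pr_ne_top]

lemma posterior_pair_eq {A : Ω → α} {B : Ω → β} (h : CondIndep μ U A B) {ω : Ω}
    (hω : ω ∈ μ.support) :
    posterior μ U (fun ω => (A ω, B ω)) (A ω, B ω) = posterior μ U B (B ω) := by
  funext u
  have hAB : pr μ {ω' | (A ω', B ω') = (A ω, B ω)} ≠ 0 := pr_ne_zero_of_mem hω rfl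
  have hB : pr μ {ω' | B ω' = B ω} ≠ 0 := pr_ne_zero_of_mem hω rfl
  rw [posterior, posterior, ENNReal.div_eq_div_iff hB (pr_ne_top μ _) hAB (pr_ne_top μ _)]
  simp only [Prod.mk.injEq] at hAB ⊢
  have := h u (A ω) (B ω)
  simp only [and_comm] at this ⊢
  rw [mul_comm, this, mul_comm]

lemma posterior_eq_of_condIndep {A : Ω → α} {B : Ω → β} (hAB : CondIndep μ U A B)
    (hBA : CondIndep μ U B A) {ω : Ω} (hω : ω ∈ μ.support) :
    posterior μ U A (A ω) = posterior μ U B (B ω) := by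
  rw [← posterior_pair_eq hBA hω, ← posterior_pair_eq hAB hω]
  funext u
  simp only [posterior, Prod.mk.injEq, and_comm]

/-- The posterior of `U` given `Y = y`, coded by the least value of `Y` of positive probability
with the same posterior, so that the class of `Y` is again `ℕ`-valued. -/
noncomputable def postClass (μ : PMF Ω) (U : Ω → γ) (Y : Ω → ℕ) (y : ℕ) : ℕ :=
  sInf {y' | pr μ {ω | Y ω = y'} ≠ 0 ∧ posterior μ U Y y' = posterior μ U Y y}

variable {Y : Ω → ℕ}

lemma posterior_postClass {y : ℕ} (hy : pr μ {ω | Y ω = y} ≠ 0) :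
    posterior μ U Y (postClass μ U Y y) = posterior μ U Y y :=
  (Nat.sInf_mem (s := {y' | pr μ {ω | Y ω = y'} ≠ 0 ∧ posterior μ U Y y' = posterior μ U Y y})
    ⟨y, hy, rfl⟩).2

lemma postClass_eq_iff {y y' : ℕ} (hy : pr μ {ω | Y ω = y} ≠ 0)
    (hy' : pr μ {ω | Y ω = y'} ≠ 0) :
    postClass μ U Y y = postClass μ U Y y' ↔ posterior μ U Y y = posterior μ U Y y' := by
  refine ⟨fun h => ?_, fun h => by simp only [postClass, h]⟩
  rw [← posterior_postClass hy, h, posterior_postClass hy']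

lemma pr_mul_pr_of_postClass_eq {y y' : ℕ} (h : postClass μ U Y y' = postClass μ U Y y)
    (u : γ) : pr μ {ω | Y ω = y ∧ U ω = u} * pr μ {ω | Y ω = y'}
      = pr μ {ω | Y ω = y} * pr μ {ω | Y ω = y' ∧ U ω = u} := by
  rcases eq_or_ne (pr μ {ω | Y ω = y}) 0 with hy | hy
  · rw [hy, pr_eq_zero_of_subset (fun ω hω => hω.1) hy, zero_mul, zero_mul]
  rcases eq_or_ne (pr μ {ω | Y ω = y'}) 0 with hy' | hy'
  · rw [hy', pr_eq_zero_of_subset (E := {ω | Y ω = y' ∧ U ω = u}) (fun ω hω => hω.1) hy',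
      mul_zero, mul_zero]
  have := congrFun ((postClass_eq_iff hy' hy).mp h) u
  rw [posterior, posterior, ENNReal.div_eq_div_iff hy (pr_ne_top μ _) hy' (pr_ne_top μ _)] at this
  rw [mul_comm, ← this, mul_comm]

open scoped Classical in
lemma pr_mul_pr_postClass (y : ℕ) (u : γ) :
    pr μ {ω | Y ω = y ∧ U ω = u} * pr μ {ω | postClass μ U Y (Y ω) = postClass μ U Y y}
      = pr μ {ω | Y ω = y} * pr μ {ω | postClass μ U Y (Y ω) = postClass μ U Y y ∧ U ω = u} := by
  have hfib := pr_eq_tsum_fiber (μ := μ) (X := Y) (φ := postClass μ U Y) (fun _ _ => rfl)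
    (postClass μ U Y y)
  have hfib₁ := hfib (fun _ => True)
  simp only [and_true] at hfib₁
  rw [hfib₁, hfib (fun ω => U ω = u), ← ENNReal.tsum_mul_left, ← ENNReal.tsum_mul_left]
  refine tsum_congr fun y' => ?_
  split_ifs with hy'
  exacts [pr_mul_pr_of_postClass_eq hy' u, by simp]

lemma condIndep_postClass : CondIndep μ Y U (fun ω => postClass μ U Y (Y ω)) := by
  intro y u t
  by_cases hyt : postClass μ U Y y = t
  · subst hyt
    have e : ∀ P : Ω → Prop, pr μ {ω | Y ω = y ∧ P ω ∧ postClass μ U Y (Y ω) = postClass μ U Y y}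
        = pr μ {ω | Y ω = y ∧ P ω} := fun P =>
      pr_congr fun ω _ => by simp only [Set.mem_ofPred_eq]; aesop
    have e' := e (fun _ => True)
    simp only [true_and, and_true] at e'
    beta_reduce
    rw [e, e', show {ω | U ω = u ∧ postClass μ U Y (Y ω) = postClass μ U Y y}
        = {ω | postClass μ U Y (Y ω) = postClass μ U Y y ∧ U ω = u} from Set.ext fun _ => and_comm]
    exact pr_mul_pr_postClass y u
  · have hzero : ∀ P : Ω → Prop, pr μ {ω | Y ω = y ∧ P ω ∧ postClass μ U Y (Y ω) = t} = 0 :=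
      fun P => pr_eq_zero_iff.mpr fun ω _ h => hyt (h.1 ▸ h.2.2)
    have e' := hzero (fun _ => True)
    simp only [true_and] at e'
    rw [hzero, e', zero_mul, zero_mul]

lemma funDep_postClass_of_condIndep {B : Ω → β} (hYB : CondIndep μ U Y B)
    (hBY : CondIndep μ U B Y) : FunDep μ B (fun ω => postClass μ U Y (Y ω)) := by
  refine funDep_iff.mpr fun ω hω ω' hω' hB => ?_
  refine (postClass_eq_iff (pr_ne_zero_of_mem hω rfl) (pr_ne_zero_of_mem hω' rfl)).mpr ?_
  rw [posterior_eq_of_condIndep hYB hBY hω, posterior_eq_of_condIndep hYB hBY hω', hB]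

lemma pr_ne_zero_of_postClass_eq {B : Ω → β} (hYB : CondIndep μ U Y B)
    (hBY : CondIndep μ U B Y) {ω ω₀ : Ω} (hω : ω ∈ μ.support) (hω₀ : ω₀ ∈ μ.support)
    (h : postClass μ U Y (Y ω) = postClass μ U Y (Y ω₀)) :
    pr μ {ω' | B ω' = B ω ∧ U ω' = U ω₀} ≠ 0 := by
  rw [← posterior_ne_zero_iff, ← posterior_eq_of_condIndep hYB hBY hω,
    (postClass_eq_iff (pr_ne_zero_of_mem hω rfl) (pr_ne_zero_of_mem hω₀ rfl)).mp h,
    posterior_ne_zero_iff]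
  exact pr_ne_zero_of_mem hω₀ ⟨rfl, rfl⟩

end Posterior

section Joint

variable {Ω ν α β γ : Type} [Zero β] {μ : PMF Ω} (X : ν → Ω → β)

/-- The joint variable `(X v)_{v ∈ S}`, padded with `0` off `S` so that the joint variables
of all sets of nodes share one codomain. -/
noncomputable def jointSet (S : Set ν) : Ω → ν → β :=
  fun ω => S.indicator (X · ω)

variable {X}

lemma jointSet_eq_indicator_iff {S : Set ν} {ω : Ω} {w : ν → β} :
    jointSet X S ω = S.indicator w ↔ ∀ v ∈ S, X v ω = w v := by
  refine ⟨fun h v hv => by simpa [jointSet, hv] using congrFun h v, fun h => funext fun v => ?_⟩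
  by_cases hv : v ∈ S <;> simp [jointSet, hv, h v]

lemma jointSet_const_of_empty (ω ω' : Ω) : jointSet X ∅ ω = jointSet X ∅ ω' := by
  simp [jointSet]

lemma funDep_jointSet_iff {W : Ω → α} {S : Set ν} :
    FunDep μ W (jointSet X S) ↔ ∀ v ∈ S, FunDep μ W (X v) := by
  simp only [funDep_iff]
  exact ⟨fun h v hv ω hω ω' hω' hW => (jointSet_eq_indicator_iff.mp (h ω hω ω' hω' hW)) v hv,
    fun h ω hω ω' hω' hW => jointSet_eq_indicator_iff.mpr fun v hv => h v hv ω hω ω' hω' hW⟩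

lemma funDep_apply_of_mem {S : Set ν} {v : ν} (hv : v ∈ S) : FunDep μ (jointSet X S) (X v) :=
  funDep_jointSet_iff.mp (funDep_refl _) v hv

lemma funDep_jointSet_of_subset {S T : Set ν} (h : S ⊆ T) :
    FunDep μ (jointSet X T) (jointSet X S) :=
  funDep_jointSet_iff.mpr fun _ hv => funDep_apply_of_mem (h hv)

lemma funDep_pair_jointSet {S T R : Set ν} (h : R ⊆ S ∪ T) :
    FunDep μ (fun ω => (jointSet X S ω, jointSet X T ω)) (jointSet X R) := by
  refine funDep_jointSet_iff.mpr fun v hv => ?_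
  rcases h hv with hS | hT
  · exact (funDep_comp _ Prod.fst).trans (funDep_apply_of_mem hS)
  · exact (funDep_comp _ Prod.snd).trans (funDep_apply_of_mem hT)

lemma infoEq_jointSet_union {S T R : Set ν} (h : R = S ∪ T) :
    InfoEq μ (jointSet X R) (fun ω => (jointSet X S ω, jointSet X T ω)) :=
  ⟨(funDep_jointSet_of_subset (h ▸ Set.subset_union_left)).pair
    (funDep_jointSet_of_subset (h ▸ Set.subset_union_right)), funDep_pair_jointSet h.le⟩

lemma infoEq_jointSet_singleton (v : ν) : InfoEq μ (jointSet X {v}) (X v) :=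
  ⟨funDep_apply_of_mem rfl, funDep_jointSet_iff.mpr fun _ hw => hw ▸ funDep_refl _⟩

lemma infoEq_subtype_jointSet (S : Set ν) :
    InfoEq μ (fun ω (v : S) => X v.1 ω) (jointSet X S) :=
  ⟨funDep_jointSet_iff.mpr fun v hv => funDep_comp (fun ω (v : S) => X v.1 ω) (· ⟨v, hv⟩),
    funDep_pi fun v => funDep_apply_of_mem v.2⟩

lemma condIndep_jointSet_empty {Y : Ω → α} {Z : Ω → γ} : CondIndep μ Y (jointSet X ∅) Z :=
  condIndep_of_funDep_right (funDep_iff.mpr fun ω _ ω' _ _ => jointSet_const_of_empty ω ω')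

lemma pr_ne_zero_of_condIndep_family {W : ν → Ω → β} {U : Ω → γ} {s : Set ν} (hs : s.Finite)
    (hci : ∀ a ∈ s, CondIndep μ (W a) (jointSet W (s \ {a})) U) {w : ν → β} {u : γ}
    (hu : pr μ {ω | U ω = u} ≠ 0) (hw : ∀ a ∈ s, pr μ {ω | W a ω = w a ∧ U ω = u} ≠ 0) :
    pr μ {ω | (∀ a ∈ s, W a ω = w a) ∧ U ω = u} ≠ 0 := by
  induction s, hs using Set.Finite.induction_on with
  | empty => simpa using hu
  | @insert a t ha _ ih =>
    have hsub : t ⊆ insert a t \ {a} := fun b hb => ⟨Set.mem_insert_of_mem a hb, by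
      rintro rfl; exact ha hb⟩
    have IH := ih (fun b hb => (hci b (Set.mem_insert_of_mem a hb)).comp_right
        (funDep_jointSet_of_subset (Set.sdiff_subset_sdiff_left (Set.subset_insert a t))))
      (fun b hb => hw b (Set.mem_insert_of_mem a hb))
    have key := ((hci a (Set.mem_insert a t)).comp_right
      (funDep_jointSet_of_subset hsub)).pr_ne_zero (hw a (Set.mem_insert a t))
      (y := t.indicator w) (by simpa only [jointSet_eq_indicator_iff] using IH)
    simpa only [jointSet_eq_indicator_iff, Set.forall_mem_insert, and_assoc] using key

end Joint

section BayesNet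

variable {Ω ν α β : Type} [Zero β] {μ : PMF Ω} {X : ν → Ω → β} {E : ν → ν → Prop} {w : ν}

lemma SatisfiesBN.condIndep (hBN : SatisfiesBN μ X E) {w : ν} {S : Set ν}
    (hS : S ⊆ nonDescSet E w) :
    CondIndep μ (X w) (jointSet X S) (jointSet X (parentSet E w)) :=
  ((hBN w).comp_right ((infoEq_subtype_jointSet _).1.trans
    (funDep_jointSet_of_subset hS))).congr_cond (infoEq_subtype_jointSet _)

lemma SatisfiesBN.condIndep_insert (hBN : SatisfiesBN μ X E) {S B C : Set ν} {w : ν}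
    (hpa : parentSet E w ⊆ B ∪ C) (hnd : ∀ v ∈ S ∪ (B ∪ C), ¬ Relation.ReflTransGen E w v)
    (h : CondIndep μ (jointSet X S) (jointSet X C) (jointSet X B)) :
    CondIndep μ (jointSet X S) (jointSet X (insert w C)) (jointSet X B) := by
  set D := (S ∪ (B ∪ C)) \ parentSet E w
  have hD : S ∪ (B ∪ C) ⊆ D ∪ parentSet E w := by simp [D]
  have hloc : CondIndep μ (X w) (fun ω => (jointSet X S ω, jointSet X (B ∪ C) ω))
      (jointSet X (parentSet E w)) :=
    (hBN.condIndep (S := D) fun v hv => ⟨hnd v hv.1, hv.2⟩).pair_cond.comp_right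
      ((funDep_pair_jointSet (Set.subset_union_left.trans hD)).pair
        (funDep_pair_jointSet (Set.subset_union_right.trans hD)))
  have hw : CondIndep μ (X w) (jointSet X S) (jointSet X (B ∪ C)) :=
    hloc.weak_union.congr_cond
      ⟨funDep_comp _ Prod.snd, (funDep_jointSet_of_subset hpa).pair (funDep_refl _)⟩
  have hSC := h.contraction (hw.symm.congr_cond (infoEq_jointSet_union (Set.union_comm B C)))
  refine hSC.comp_right (funDep_jointSet_iff.mpr fun v hv => ?_)
  rcases hv with rfl | hv
  · exact funDep_comp _ Prod.snd
  · exact (funDep_comp _ Prod.fst).trans (funDep_apply_of_mem hv)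

lemma SatisfiesBN.condIndep_path (hBN : SatisfiesBN μ X E) (c : ℕ → ν) {S B : Set ν} {t N : ℕ}
    (hpa : ∀ m, t ≤ m → m < N → parentSet E (c m) ⊆ B ∪ c '' Set.Ico t m)
    (hnd : ∀ m, t ≤ m → m < N →
      ∀ v ∈ S ∪ (B ∪ c '' Set.Ico t m), ¬ Relation.ReflTransGen E (c m) v) (htN : t ≤ N) :
    CondIndep μ (jointSet X S) (jointSet X (c '' Set.Ico t N)) (jointSet X B) := by
  induction N, htN using Nat.le_induction with
  | base => simpa using condIndep_jointSet_empty
  | succ N htN ih =>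
    rw [show Set.Ico t (N + 1) = insert N (Set.Ico t N) by ext; simp; omega,
      Set.image_insert_eq]
    exact hBN.condIndep_insert (hpa N htN N.lt_succ_self) (hnd N htN N.lt_succ_self)
      (ih (fun m h₁ h₂ => hpa m h₁ (by omega)) (fun m h₁ h₂ => hnd m h₁ (by omega)))

lemma localCond_of_funDep_parents (h : FunDep μ (jointSet X (parentSet E w)) (X w)) :
    CondIndep μ (X w) (fun ω (v : nonDescSet E w) => X v.1 ω)
      (fun ω (v : parentSet E w) => X v.1 ω) :=
  condIndep_of_funDep_left ((infoEq_subtype_jointSet _).1.trans h)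

lemma localCond_of_funDep_nonDesc
    (h : ∀ v ∈ nonDescSet E w, FunDep μ (jointSet X (parentSet E w)) (X v)) :
    CondIndep μ (X w) (fun ω (v : nonDescSet E w) => X v.1 ω)
      (fun ω (v : parentSet E w) => X v.1 ω) :=
  condIndep_of_funDep_right ((infoEq_subtype_jointSet _).1.trans
    ((funDep_jointSet_iff.mpr h).trans (infoEq_subtype_jointSet _).2))

lemma localCond_of_indep (hpa : parentSet E w = ∅) {Z : Ω → α} (hind : Indep μ (X w) Z)
    (h : ∀ v ∈ nonDescSet E w, FunDep μ Z (X v)) :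
    CondIndep μ (X w) (fun ω (v : nonDescSet E w) => X v.1 ω)
      (fun ω (v : parentSet E w) => X v.1 ω) :=
  (condIndep_iff_indep_of_const fun _ _ => funext fun v =>
    (Set.eq_empty_iff_forall_notMem.mp hpa v.1 v.2).elim).mpr
    (hind.comp_right ((funDep_jointSet_iff.mpr h).trans (infoEq_subtype_jointSet _).2))

end BayesNet

namespace BNode

variable {n k : ℕ}

def idx : BNode n k → Fin n
  | .u i | .y i | .z i | .x i _ => i

/-- Position on the chain `U_i → Y_i → X_i^1 → ⋯ → X_i^k → Z_i` of network 1. -/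
def pos : BNode n k → ℕ
  | .u _ => 0
  | .y _ => 1
  | .x _ j => j + 2
  | .z _ => k + 2

lemma pos_le (v : BNode n k) : v.pos ≤ k + 2 := by
  cases v <;> simp [pos]

end BNode

/-- The edges among the `U_i`, common to both networks (`C` is `C1`, resp. `C2`). -/
def uEdge {n : ℕ} (C : Finset (Fin n)) (i i' : Fin n) : Prop :=
  (i ∈ C ∧ i' ∉ C) ∨ (i ∉ C ∧ i' ∉ C ∧ i < i')

section UEdge

variable {n : ℕ} {C : Finset (Fin n)} {i m : Fin n}

lemma mem_of_not_uEdge (hi : i ∈ C) (h : ¬ uEdge C i m) : m ∈ C := by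
  by_contra hm
  exact h (Or.inl ⟨hi, hm⟩)

lemma uEdge_of_not_uEdge (hi : i ∉ C) (hne : m ≠ i) (h : ¬ uEdge C i m) : uEdge C m i := by
  by_cases hm : m ∈ C
  · exact Or.inl ⟨hm, hi⟩
  · exact Or.inr ⟨hm, hi, lt_of_le_of_ne (not_lt.mp fun hlt => h (Or.inr ⟨hi, hm, hlt⟩)) hne⟩

end UEdge

section Network1Graph

variable {n k : ℕ} {C1 : Finset (Fin n)}

open BNode

def chain (i : Fin n) : ℕ → BNode n k
  | 0 => .u i
  | 1 => .y i
  | m + 2 => if h : m < k then .x i ⟨m, h⟩ else .z i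

lemma chain_idx_pos (v : BNode n k) : chain v.idx v.pos = v := by
  cases v <;> simp [chain, idx, pos]

lemma idx_chain (i : Fin n) (m : ℕ) : (chain i m : BNode n k).idx = i := by
  match m with
  | 0 | 1 => rfl
  | m + 2 => by_cases h : m < k <;> simp [chain, h, idx]

lemma pos_chain (i : Fin n) {m : ℕ} (hm : m ≤ k + 2) : (chain i m : BNode n k).pos = m := by
  match m with
  | 0 | 1 => rfl
  | m + 2 => by_cases h : m < k <;> simp [chain, h, pos]; omega

lemma edge1_chain (hk : 1 ≤ k) (i : Fin n) {m : ℕ} (hm : m ≤ k + 1) :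
    edge1 n k C1 (chain i m) (chain i (m + 1)) := by
  match m with
  | 0 => exact rfl
  | 1 => simp [chain, show 0 < k by omega, edge1]
  | m + 2 =>
    simp only [chain, show m < k by omega, dite_true]
    split <;> simp [edge1]; omega

lemma eq_chain_of_edge1 {v w : BNode n k} (h : edge1 n k C1 v w) (hw : 0 < w.pos) :
    v = chain w.idx (w.pos - 1) := by
  cases v <;> cases w <;> simp_all [edge1, pos, idx, chain]
  obtain ⟨rfl, hj⟩ := h
  rw [show k + 1 = (k - 1) + 2 by omega]
  simp only [show k - 1 < k by omega, dite_true, x.injEq, true_and]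
  exact Fin.ext hj

lemma idx_pos_of_edge1 {v w : BNode n k} (h : edge1 n k C1 v w) (hv : 0 < v.pos) :
    w.idx = v.idx ∧ v.pos < w.pos := by
  cases v <;> cases w <;> simp_all [edge1, pos, idx]; omega

lemma idx_pos_of_reach_edge1 {v w : BNode n k} (h : Relation.ReflTransGen (edge1 n k C1) v w)
    (hv : 0 < v.pos) : w.idx = v.idx ∧ v.pos ≤ w.pos := by
  induction h with
  | refl => exact ⟨rfl, le_rfl⟩
  | tail _ e ih =>
    have := idx_pos_of_edge1 e (by omega)
    exact ⟨this.1.trans ih.1, by omega⟩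

lemma idx_of_reach_u_edge1 {i : Fin n} {v : BNode n k}
    (h : Relation.ReflTransGen (edge1 n k C1) (.u i) v) : v.idx = i ∨ v.idx ∉ C1 := by
  induction h with
  | refl => exact Or.inl rfl
  | @tail c d _ e ih =>
    rcases Nat.eq_zero_or_pos c.pos with hc | hc
    · cases c <;> simp [pos] at hc
      cases d <;> simp only [edge1] at e
      · rcases e with ⟨-, h⟩ | ⟨-, h, -⟩ <;> exact Or.inr h
      · exact e ▸ ih
    · exact (idx_pos_of_edge1 e hc).1 ▸ ih

lemma parentSet_edge1_u {i : Fin n} (hi : i ∈ C1) : parentSet (edge1 n k C1) (.u i) = ∅ :=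
  Set.eq_empty_of_forall_notMem fun v hv => by
    cases v <;> simp_all [parentSet, edge1]

lemma reach_edge1_u_idx (hk : 1 ≤ k) (v : BNode n k) :
    Relation.ReflTransGen (edge1 n k C1) (.u v.idx) v := by
  have : ∀ m ≤ k + 2, Relation.ReflTransGen (edge1 n k C1) (.u v.idx) (chain v.idx m) := by
    intro m hm
    induction m with
    | zero => rfl
    | succ m ih => exact (ih (by omega)).tail (edge1_chain hk _ (by omega))
  simpa only [chain_idx_pos] using this v.pos v.pos_le

end Network1Graph

section Network2Graph

variable {n k : ℕ} {C2 : Finset (Fin n)} {A : Fin k → Finset (Fin n)} {b : Fin k → Fin n}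

open BNode Relation

lemma eq_of_reach_y_edge2 {i : Fin n} {v : BNode n k}
    (h : ReflTransGen (edge2 n k C2 A b) (.y i) v) : v = .y i := by
  induction h with
  | refl => rfl
  | tail _ e ih => subst ih; cases ‹BNode n k› <;> simp [edge2] at e

lemma eq_of_reach_z_edge2 {i : Fin n} {v : BNode n k}
    (h : ReflTransGen (edge2 n k C2 A b) (.z i) v) : v = .z i ∨ v = .y i := by
  induction h with
  | refl => exact Or.inl rfl
  | tail _ e ih =>
    rcases ih with rfl | rfl <;> cases ‹BNode n k› <;> simp_all [edge2]

lemma exists_eq_x_of_reach_x_edge2 {i : Fin n} {j : Fin k} {v : BNode n k}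
    (h : ReflTransGen (edge2 n k C2 A b) (.x i j) v) : ∃ i' j', v = .x i' j' := by
  induction h with
  | refl => exact ⟨i, j, rfl⟩
  | tail _ e ih =>
    obtain ⟨i', j', rfl⟩ := ih
    cases ‹BNode n k› <;> simp_all [edge2]

lemma idx_of_reach_u_edge2 {i : Fin n} {v : BNode n k}
    (h : ReflTransGen (edge2 n k C2 A b) (.u i) v) :
    v.idx = i ∨ v.idx ∉ C2 ∨ ∃ i' j', v = .x i' j' := by
  induction h with
  | refl => exact Or.inl rfl
  | @tail c d _ e ih =>
    cases c <;> cases d <;> simp only [edge2] at e <;> simp only [idx] at ih ⊢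
    all_goals first
      | exact Or.inr (Or.inr ⟨_, _, rfl⟩)
      | (subst e; simpa using ih)
      | exact Or.inr (Or.inl (by rcases e with ⟨-, h⟩ | ⟨-, h, -⟩ <;> exact h))

lemma parentSet_edge2_y (i : Fin n) : parentSet (edge2 n k C2 A b) (.y i) = {.z i} := by
  ext v; cases v <;> simp [parentSet, edge2, eq_comm]

lemma parentSet_edge2_z (i : Fin n) : parentSet (edge2 n k C2 A b) (.z i) = {.u i} := by
  ext v; cases v <;> simp [parentSet, edge2, eq_comm]

lemma parentSet_edge2_u {i : Fin n} (hi : i ∈ C2) : parentSet (edge2 n k C2 A b) (.u i) = ∅ :=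
  Set.eq_empty_of_forall_notMem fun v hv => by
    cases v <;> simp_all [parentSet, edge2]

lemma parentSet_edge2_x (j : Fin k) :
    parentSet (edge2 n k C2 A b) (.x (b j) j) = (fun a => .x a j) '' A j := by
  ext v; cases v <;> simp [parentSet, edge2]
  aesop

end Network2Graph

section NetworkCI

open BNode Relation

variable {Ω : Type} {μ : PMF Ω} {n k : ℕ} {X : BNode n k → Ω → ℕ}

lemma infoEq_jointSet_range_u : InfoEq μ (jointSet X (Set.range BNode.u)) (Ujoint X) :=
  ⟨funDep_pi fun i => funDep_apply_of_mem ⟨i, rfl⟩, funDep_jointSet_iff.mpr fun _ ⟨i, hi⟩ =>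
    hi ▸ funDep_comp (Ujoint X) (· i)⟩

lemma mem_chain_image {v : BNode n k} {i : Fin n} {t N : ℕ} (hi : v.idx = i) (ht : t ≤ v.pos)
    (hN : v.pos < N) : v ∈ chain i '' Set.Ico t N :=
  ⟨v.pos, ⟨ht, hN⟩, hi ▸ chain_idx_pos v⟩

section Network1

variable {C1 : Finset (Fin n)}

lemma condIndep_chain (hBN1 : SatisfiesBN μ X (edge1 n k C1)) {i : Fin n}
    {S B : Set (BNode n k)} {t N : ℕ} (ht : 1 ≤ t) (htN : t ≤ N) (hN : N ≤ k + 3)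
    (hB : chain i (t - 1) ∈ B) (hSB : ∀ v ∈ S ∪ B, v.idx ≠ i ∨ v.pos < t) :
    CondIndep μ (jointSet X S) (jointSet X (chain i '' Set.Ico t N)) (jointSet X B) := by
  refine hBN1.condIndep_path (chain i) (fun m htm hmN v hv => ?_)
    (fun m htm hmN v hv hreach => ?_) htN
  · have hm := pos_chain (k := k) i (m := m) (by omega)
    obtain rfl : v = chain i (m - 1) := by
      simpa only [idx_chain, hm] using eq_chain_of_edge1 hv (by omega)
    by_cases hmt : m = t
    · exact Or.inl (hmt ▸ hB)
    · exact Or.inr ⟨m - 1, ⟨by omega, by omega⟩, rfl⟩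
  · have hreach' := idx_pos_of_reach_edge1 hreach (by rw [pos_chain i (by omega)]; omega)
    rw [idx_chain, pos_chain i (by omega)] at hreach'
    rcases hv with hv | hv | ⟨m', hm', rfl⟩
    · rcases hSB v (Or.inl hv) with h | h <;> [exact h hreach'.1; omega]
    · rcases hSB v (Or.inr hv) with h | h <;> [exact h hreach'.1; omega]
    · rw [pos_chain i (by simp at hm'; omega)] at hreach'
      simp at hm'
      omega

variable (hBN1 : SatisfiesBN μ X (edge1 n k C1))
include hBN1

lemma condIndep_tupleVar {i : Fin n} {S : Set (BNode n k)} (hS : ∀ v ∈ S, v.idx ≠ i) :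
    CondIndep μ (jointSet X S) (tupleVar X i) (Ujoint X) := by
  refine ((condIndep_chain hBN1 (B := Set.range BNode.u) le_rfl (by omega) le_rfl ⟨i, rfl⟩
    fun v hv => ?_).comp_right ?_).congr_cond infoEq_jointSet_range_u
  · rcases hv with hv | ⟨i', rfl⟩
    exacts [Or.inl (hS v hv), Or.inr (by simp [pos])]
  · refine (funDep_pi fun j => funDep_apply_of_mem ?_).pair
      ((funDep_apply_of_mem ?_).pair (funDep_apply_of_mem ?_)) <;>
    refine mem_chain_image rfl ?_ ?_ <;> simp [pos]

lemma condIndep_u_x_y (i : Fin n) (j : Fin k) :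
    CondIndep μ (Ujoint X) (X (.x i j)) (X (.y i)) := by
  have h := condIndep_chain hBN1 (S := Set.range BNode.u) (B := {.y i}) (i := i) (t := 2)
    (N := j + 3) (by omega) (by omega) (by omega) rfl fun v hv => by
      rcases hv with ⟨i', rfl⟩ | rfl <;> simp [pos]
  have hx : (BNode.x i j : BNode n k) ∈ chain i '' Set.Ico 2 ((j : ℕ) + 3) :=
    mem_chain_image rfl (by simp [pos]) (by simp [pos])
  exact ((h.comp_right (funDep_apply_of_mem hx)).congr_cond
    (infoEq_jointSet_singleton _)).comp_left infoEq_jointSet_range_u.1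

lemma condIndep_u_z_x (i : Fin n) (j : Fin k) :
    CondIndep μ (Ujoint X) (X (.z i)) (X (.x i j)) := by
  have h := condIndep_chain hBN1 (S := Set.range BNode.u) (B := {.x i j}) (i := i)
    (t := j + 3) (N := k + 3) (by omega) (by omega) le_rfl (by simp [chain]) fun v hv => by
      rcases hv with ⟨i', rfl⟩ | rfl <;> simp [pos]
  have hz : (BNode.z i : BNode n k) ∈ chain i '' Set.Ico ((j : ℕ) + 3) (k + 3) :=
    mem_chain_image rfl (by simp [pos]) (by simp [pos])
  exact ((h.comp_right (funDep_apply_of_mem hz)).congr_cond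
    (infoEq_jointSet_singleton _)).comp_left infoEq_jointSet_range_u.1

lemma indep_y_edge1 {i : Fin n} (hi : i ∈ C1) :
    Indep μ (X (.y i)) (jointSet X ((fun m => .y m) '' {m | m ∈ C1 ∧ m ≠ i})) := by
  have h := hBN1.condIndep_path (chain i) (S := (fun m => .y m) '' {m | m ∈ C1 ∧ m ≠ i})
    (B := ∅) (t := 0) (N := 2) (fun m _ hm v hv => ?_) (fun m _ hm v hv hreach => ?_) (by omega)
  · exact ((condIndep_iff_indep_of_const jointSet_const_of_empty).mp h).comp_right
      (funDep_apply_of_mem (mem_chain_image rfl (by simp [pos]) (by simp [pos]))) |>.symm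
  · interval_cases m
    · simp [chain, parentSet_edge1_u hi] at hv
    · exact Or.inr ⟨0, by simp, (eq_chain_of_edge1 hv (by simp [chain, pos])).symm⟩
  · interval_cases m
    · rcases hv with ⟨m', ⟨hm', hne⟩, rfl⟩ | hv | hv
      · rcases idx_of_reach_u_edge1 hreach with h | h <;> simp_all [idx]
      · simp at hv
      · simp at hv
    · have := idx_pos_of_reach_edge1 hreach (by simp [chain, pos])
      rcases hv with ⟨m', ⟨hm', hne⟩, rfl⟩ | hv | ⟨m', hm', rfl⟩
      · simp_all [idx, chain]
      · simp at hv
      · simp at hm'; subst hm'; simp [chain, pos] at this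

end Network1

section Network2

variable {C2 : Finset (Fin n)} {A : Fin k → Finset (Fin n)} {b : Fin k → Fin n}
variable (hBN2 : SatisfiesBN μ X (edge2 n k C2 A b))
include hBN2

lemma condIndep_y_u_x (i : Fin n) (j : Fin k) :
    CondIndep μ (X (.y i)) (fun ω => (Ujoint X ω, X (.x i j) ω)) (X (.z i)) := by
  have h := hBN2.condIndep (w := .y i) (S := Set.range BNode.u ∪ {.x i j}) fun v hv => by
    rcases hv with ⟨i', rfl⟩ | rfl <;>
      exact ⟨fun h => (by cases eq_of_reach_y_edge2 h), by simp [edge2]⟩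
  rw [parentSet_edge2_y] at h
  exact (h.comp_right (((funDep_jointSet_of_subset Set.subset_union_left).trans
    infoEq_jointSet_range_u.1).pair (funDep_apply_of_mem (Or.inr rfl)))).congr_cond
    (infoEq_jointSet_singleton _)

lemma condIndep_x_y_parents (j : Fin k) :
    CondIndep μ (X (.x (b j) j)) (X (.y (b j))) (jointSet X ((fun a => .x a j) '' A j)) := by
  have h := hBN2.condIndep (w := .x (b j) j) (S := {.y (b j)}) fun v hv => by
    subst hv
    exact ⟨fun h => by simpa using exists_eq_x_of_reach_x_edge2 h, by simp [edge2]⟩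
  rw [parentSet_edge2_x] at h
  exact h.comp_right (infoEq_jointSet_singleton _).1

lemma indep_y_edge2 {i : Fin n} (hi : i ∈ C2) :
    Indep μ (X (.y i)) (jointSet X ((fun m => .y m) '' {m | m ∈ C2 ∧ m ≠ i})) := by
  let c : ℕ → BNode n k := fun m => if m = 0 then .u i else if m = 1 then .z i else .y i
  have h := hBN2.condIndep_path c (S := (fun m => .y m) '' {m | m ∈ C2 ∧ m ≠ i})
    (B := ∅) (t := 0) (N := 3) (fun m _ hm v hv => ?_) (fun m _ hm v hv hreach => ?_) (by omega)
  · exact ((condIndep_iff_indep_of_const jointSet_const_of_empty).mp h).comp_right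
      (funDep_apply_of_mem ⟨2, by simp, rfl⟩) |>.symm
  · interval_cases m
    · simp [c, parentSet_edge2_u hi] at hv
    · rw [show c 1 = .z i from rfl, parentSet_edge2_z] at hv
      exact Or.inr ⟨0, by simp, hv.symm⟩
    · rw [show c 2 = .y i from rfl, parentSet_edge2_y] at hv
      exact Or.inr ⟨1, by simp, hv.symm⟩
  · interval_cases m
    · rcases hv with ⟨m', ⟨hm', hne⟩, rfl⟩ | hv | hv
      · rcases idx_of_reach_u_edge2 (b := b) hreach with h | h | h <;> simp_all [idx]
      · simp at hv
      · simp at hv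
    · rcases eq_of_reach_z_edge2 (i := i) hreach with rfl | rfl <;>
      rcases hv with ⟨m', ⟨-, hne⟩, h⟩ | hv | ⟨m', hm', h⟩ <;> simp_all [c]
    · obtain rfl := eq_of_reach_y_edge2 (i := i) hreach
      rcases hv with ⟨m', ⟨-, hne⟩, h⟩ | hv | ⟨m', hm', h⟩ <;> simp_all [c]
      interval_cases m' <;> simp at h

end Network2

lemma condIndep_u_y_x {C1 C2 : Finset (Fin n)} {A : Fin k → Finset (Fin n)} {b : Fin k → Fin n}
    (hBN1 : SatisfiesBN μ X (edge1 n k C1)) (hBN2 : SatisfiesBN μ X (edge2 n k C2 A b))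
    (i : Fin n) (j : Fin k) : CondIndep μ (Ujoint X) (X (.y i)) (X (.x i j)) :=
  ((condIndep_u_z_x hBN1 i j).contraction (condIndep_y_u_x hBN2 i j).weak_union.symm).comp_right
    (funDep_comp _ Prod.snd)

end NetworkCI

section Soundness

open BNode

variable {Ω : Type} {μ : PMF Ω} {n k : ℕ} {X : BNode n k → Ω → ℕ}

/-- `V_i`: the posterior class of `Y_i` for `U = (U_1, …, U_n)`. -/
noncomputable def classY (μ : PMF Ω) (X : BNode n k → Ω → ℕ) (i : Fin n) : Ω → ℕ :=
  fun ω => postClass μ (Ujoint X) (X (.y i)) (X (.y i) ω)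

lemma finSupp_classY (hfin : ∀ v, FinSupp μ (X v)) (i : Fin n) : FinSupp μ (classY μ X i) := by
  have h := (hfin (.y i)).image (postClass μ (Ujoint X) (X (.y i)))
  rwa [Set.image_image] at h

lemma mutIndepOn_classY {C : Finset (Fin n)}
    (h : ∀ i ∈ C, Indep μ (X (.y i)) (jointSet X ((fun m => .y m) '' {m | m ∈ C ∧ m ≠ i}))) :
    MutIndepOn μ (classY μ X) C := by
  intro i hi
  refine ((h i hi).comp_left (funDep_comp _ _)).comp_right (funDep_pi fun m => ?_)
  exact (funDep_apply_of_mem (X := X) (Set.mem_image_of_mem (fun m => BNode.y m) m.2)).trans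
    (funDep_comp _ _)

variable {C1 C2 : Finset (Fin n)} {A : Fin k → Finset (Fin n)} {b : Fin k → Fin n}

lemma condIndep_y_of_funDep_classY (hBN1 : SatisfiesBN μ X (edge1 n k C1)) {a₀ b₀ b₀' : Fin n}
    (hb₀ : b₀ ≠ a₀) (hb₀' : b₀' ≠ b₀) (h : FunDep μ (classY μ X a₀) (classY μ X b₀)) :
    CondIndep μ (X (.y b₀)) (X (.y b₀')) (X (.y a₀)) := by
  have hU : CondIndep μ (X (.y b₀)) (fun ω => (X (.y b₀') ω, X (.y a₀) ω)) (Ujoint X) :=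
    ((condIndep_tupleVar hBN1 (i := b₀) (S := {.y b₀', .y a₀}) fun v hv => by
      rcases hv with rfl | rfl
      exacts [hb₀', hb₀.symm]).symm.comp_left (funDep_comp _ fun t => t.2.1)).comp_right
      ((funDep_apply_of_mem (Set.mem_insert _ _)).pair
        (funDep_apply_of_mem (Set.mem_insert_of_mem _ rfl)))
  exact (hU.of_sufficient (funDep_comp _ _) condIndep_postClass).weak_union.congr_cond
    ⟨funDep_comp _ Prod.snd,
      ((funDep_comp (X (.y a₀)) (postClass μ (Ujoint X) (X (.y a₀)))).trans h).pair
        (funDep_refl _)⟩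

variable (hBN1 : SatisfiesBN μ X (edge1 n k C1)) (hBN2 : SatisfiesBN μ X (edge2 n k C2 A b))
include hBN1 hBN2

lemma funDep_x_classY (i : Fin n) (j : Fin k) : FunDep μ (X (.x i j)) (classY μ X i) :=
  funDep_postClass_of_condIndep (condIndep_u_y_x hBN1 hBN2 i j) (condIndep_u_x_y hBN1 i j)

lemma funDep_parents_classY (j : Fin k) :
    FunDep μ (jointSet X ((fun a => .x a j) '' A j)) (classY μ X (b j)) :=
  funDep_of_condIndep (condIndep_x_y_parents hBN2 j) (funDep_x_classY hBN1 hBN2 (b j) j)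
    (funDep_comp _ _)

lemma funDep_u_classY {j : Fin k} (hb : b j ∉ A j) : FunDep μ (Ujoint X) (classY μ X (b j)) :=
  funDep_of_condIndep (((condIndep_tupleVar hBN1 (i := b j)
    (S := (fun a => .x a j) '' A j) fun _ ⟨_, ha, hv⟩ =>
      hv ▸ fun h => hb (h ▸ ha)).symm.comp_left (funDep_comp _ fun t => t.2.1)))
    (funDep_comp _ _) (funDep_parents_classY hBN1 hBN2 j)

lemma funDep_classY_of_parents {j : Fin k} (hb : b j ∉ A j) :
    FunDep μ (jointFin (classY μ X) (A j)) (classY μ X (b j)) := by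
  refine funDep_iff.mpr fun ω hω ω₀ hω₀ hV => ?_
  have hpos : ∀ a ∈ (A j : Set (Fin n)),
      pr μ {ω' | X (.x a j) ω' = X (.x a j) ω ∧ Ujoint X ω' = Ujoint X ω₀} ≠ 0 := fun a ha =>
    pr_ne_zero_of_postClass_eq (condIndep_u_y_x hBN1 hBN2 a j) (condIndep_u_x_y hBN1 a j)
      hω hω₀ (congrFun hV ⟨a, ha⟩)
  have hci : ∀ a ∈ (A j : Set (Fin n)), CondIndep μ (X (.x a j))
      (jointSet (fun a => X (.x a j)) ((A j : Set (Fin n)) \ {a})) (Ujoint X) := fun a _ =>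
    ((condIndep_tupleVar hBN1 (i := a) (S := (fun a' => .x a' j) '' ((A j : Set (Fin n)) \ {a}))
      fun v ⟨a', ha', hv⟩ => hv ▸ ha'.2).symm.comp_left (funDep_comp _ fun t => t.1 j)).comp_right
      (funDep_jointSet_iff.mpr fun a' ha' => funDep_apply_of_mem ⟨a', ha', rfl⟩)
  -- Given `U = U ω₀` the `X_a^j` are independent, and each value `X_a^j ω` is compatible with
  -- `U ω₀` since `V_a ω = V_a ω₀`: a common witness `ω₁` links `ω` to `ω₀`.
  obtain ⟨ω₁, hω₁, hx, hu⟩ := exists_mem_support_of_pr_ne_zero <|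
    pr_ne_zero_of_condIndep_family (A j).finite_toSet hci (pr_ne_zero_of_mem hω₀ rfl) hpos
  calc classY μ X (b j) ω = classY μ X (b j) ω₁ :=
        funDep_iff.mp (funDep_parents_classY hBN1 hBN2 j) ω hω ω₁ hω₁
          (jointSet_eq_indicator_iff.mpr fun _ ⟨a, ha, hv⟩ => hv ▸ (hx a ha).symm)
    _ = classY μ X (b j) ω₀ := funDep_iff.mp (funDep_u_classY hBN1 hBN2 hb) ω₁ hω₁ ω₀ hω₀ hu

end Soundness

section Completeness

open BNode Relation

variable {Ω : Type} {μ : PMF Ω} {n k : ℕ} {V : Fin n → Ω → ℕ}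

def nodeVar (V : Fin n → Ω → ℕ) : BNode n k → Ω → ℕ := fun v => V v.idx

section ULayer

variable {C : Finset (Fin n)} {E : BNode n k → BNode n k → Prop} {i m : Fin n}

lemma funDep_mutIndep_of_not_reach (hE : ∀ a a', E (.u a) (.u a') ↔ uEdge C a a') (hi : i ∈ C)
    (hm : ¬ ReflTransGen E (.u i) (.u m)) :
    FunDep μ (fun ω (j : {j // j ∈ C ∧ j ≠ i}) => V j.1 ω) (V m) :=
  funDep_comp (fun ω (j : {j // j ∈ C ∧ j ≠ i}) => V j.1 ω)
    (· ⟨m, mem_of_not_uEdge hi fun h => hm (.single ((hE i m).mpr h)), fun h => hm (h ▸ .refl)⟩)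

lemma funDep_parents_of_not_reach (hE : ∀ a a', E (.u a) (.u a') ↔ uEdge C a a') (hi : i ∉ C)
    (hm : ¬ ReflTransGen E (.u i) (.u m)) :
    FunDep μ (jointSet (nodeVar V) (parentSet E (.u i))) (V m) :=
  funDep_apply_of_mem (X := nodeVar V) (v := .u m) <| (hE m i).mpr <|
    uEdge_of_not_uEdge hi (fun h => hm (h ▸ .refl)) fun h => hm (.single ((hE i m).mpr h))

end ULayer

section Network1

variable {C1 : Finset (Fin n)}

lemma funDep_of_not_reach_edge1 (hk : 1 ≤ k) {i : Fin n} {α : Type} {Z : Ω → α}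
    (hZ : ∀ m, ¬ ReflTransGen (edge1 n k C1) (.u i) (.u m) → FunDep μ Z (V m))
    {v : BNode n k} (hv : v ∈ nonDescSet (edge1 n k C1) (.u i)) : FunDep μ Z (V v.idx) :=
  hZ _ fun h => hv.1 (h.trans (reach_edge1_u_idx hk v))

theorem satisfiesBN_edge1 (hk : 1 ≤ k) (hC1 : MutIndepOn μ V C1) :
    SatisfiesBN μ (nodeVar V : BNode n k → Ω → ℕ) (edge1 n k C1) := by
  intro w
  rcases Nat.eq_zero_or_pos w.pos with hw | hw
  · obtain ⟨i, rfl⟩ : ∃ i, w = .u i := by cases w <;> simp_all [pos]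
    by_cases hi : i ∈ C1
    · exact localCond_of_indep (parentSet_edge1_u hi) (hC1 i hi) fun v hv =>
        funDep_of_not_reach_edge1 hk
          (fun m hm => funDep_mutIndep_of_not_reach (fun _ _ => Iff.rfl) hi hm) hv
    · exact localCond_of_funDep_nonDesc fun v hv => funDep_of_not_reach_edge1 hk
        (fun m hm => funDep_parents_of_not_reach (fun _ _ => Iff.rfl) hi hm) hv
  · have hp : chain w.idx (w.pos - 1) ∈ parentSet (edge1 n k C1) w := by
      have := edge1_chain (C1 := C1) hk w.idx (m := w.pos - 1) (by have := w.pos_le; omega)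
      rwa [Nat.sub_add_cancel hw, chain_idx_pos] at this
    refine localCond_of_funDep_parents ?_
    simpa only [nodeVar, idx_chain] using funDep_apply_of_mem (X := nodeVar V) hp

end Network1

section Network2

variable {C2 : Finset (Fin n)} {A : Fin k → Finset (Fin n)} {b : Fin k → Fin n}

lemma funDep_of_not_reach_edge2 (hb : ∀ j, b j ∉ A j)
    (hA : ∀ j, FunDep μ (jointFin V (A j)) (V (b j))) {i : Fin n} {α : Type} {Z : Ω → α}
    (hZ : ∀ m, ¬ ReflTransGen (edge2 n k C2 A b) (.u i) (.u m) → FunDep μ Z (V m))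
    {v : BNode n k} (hv : v ∈ nonDescSet (edge2 n k C2 A b) (.u i)) : FunDep μ Z (V v.idx) := by
  have hZ' : ∀ m, ReflTransGen (edge2 n k C2 A b) (.u m) v → FunDep μ Z (V m) :=
    fun m h => hZ m fun h' => hv.1 (h'.trans h)
  cases v with
  | u m => exact hZ' m .refl
  | z m => exact hZ' m (.single rfl)
  | y m => exact hZ' m (ReflTransGen.tail (b := BNode.z m) (.single rfl) rfl)
  | x m j =>
    by_cases hm : m = b j
    · subst hm
      refine (funDep_pi fun (a : {a // a ∈ A j}) => hZ' a.1 ?_).trans (hA j)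
      exact (ReflTransGen.single (b := BNode.x a.1 j) ⟨rfl, fun h => hb j (h ▸ a.2)⟩).tail
        ⟨rfl, rfl, a.2⟩
    · exact hZ' m (.single ⟨rfl, hm⟩)

theorem satisfiesBN_edge2 (hb : ∀ j, b j ∉ A j) (hC2 : MutIndepOn μ V C2)
    (hA : ∀ j, FunDep μ (jointFin V (A j)) (V (b j))) :
    SatisfiesBN μ (nodeVar V : BNode n k → Ω → ℕ) (edge2 n k C2 A b) := by
  intro w
  cases w with
  | u i =>
    by_cases hi : i ∈ C2
    · exact localCond_of_indep (parentSet_edge2_u hi) (hC2 i hi) fun v hv =>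
        funDep_of_not_reach_edge2 hb hA
          (fun m hm => funDep_mutIndep_of_not_reach (fun _ _ => Iff.rfl) hi hm) hv
    · exact localCond_of_funDep_nonDesc fun v hv => funDep_of_not_reach_edge2 hb hA
        (fun m hm => funDep_parents_of_not_reach (fun _ _ => Iff.rfl) hi hm) hv
  | z i =>
    exact localCond_of_funDep_parents
      (funDep_apply_of_mem (X := nodeVar V) (v := .u i)
        (show BNode.u i ∈ parentSet (edge2 n k C2 A b) (.z i) from rfl))
  | y i =>
    exact localCond_of_funDep_parents
      (funDep_apply_of_mem (X := nodeVar V) (v := .z i)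
        (show BNode.z i ∈ parentSet (edge2 n k C2 A b) (.y i) from rfl))
  | x i j =>
    refine localCond_of_funDep_parents ?_
    by_cases hi : i = b j
    · subst hi
      exact (funDep_pi fun (a : {a // a ∈ A j}) => funDep_apply_of_mem (X := nodeVar V)
        (show BNode.x a.1 j ∈ parentSet (edge2 n k C2 A b) (.x (b j) j) from
          ⟨rfl, rfl, a.2⟩)).trans (hA j)
    · exact funDep_apply_of_mem (X := nodeVar V) (v := .u i)
        (show BNode.u i ∈ parentSet (edge2 n k C2 A b) (.x i j) from ⟨rfl, hi⟩)

end Network2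

end Completeness

theorem networks_CI_iff_implication_general (n k : ℕ) (hk : 1 ≤ k)
    (C1 C2 : Finset (Fin n))
    (A : Fin k → Finset (Fin n)) (b : Fin k → Fin n) (hb : ∀ j, b j ∉ A j)
    (a0 b0 b0' : Fin n)
    (hb0 : b0 ≠ a0) (hb0'b : b0' ≠ b0)
    (hentry2 : ∃ j : Fin k, A j = {b0'} ∧ b j = b0) :
    (∀ (Ω : Type) (μ : PMF Ω) (X : BNode n k → Ω → ℕ),
        (∀ v, FinSupp μ (X v)) →
        SatisfiesBN μ X (edge1 n k C1) →
        SatisfiesBN μ X (edge2 n k C2 A b) →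
        CondIndep μ (X (.y b0)) (X (.y b0')) (X (.y a0))) ↔
    (∀ (Ω : Type) (μ : PMF Ω) (V : Fin n → Ω → ℕ),
        (∀ i, FinSupp μ (V i)) →
        MutIndepOn μ V C1 → MutIndepOn μ V C2 →
        (∀ j : Fin k, FunDep μ (jointFin V (A j)) (V (b j))) →
        FunDep μ (V a0) (V b0)) := by
  constructor
  · intro hL Ω μ V hfin hC1 hC2 hA
    have hCI := hL Ω μ (nodeVar V) (fun v => hfin v.idx) (satisfiesBN_edge1 hk hC1)
      (satisfiesBN_edge2 hb hC2 hA)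
    obtain ⟨j, hAj, rfl⟩ := hentry2
    have hdep : FunDep μ (V b0') (V (b j)) := by
      refine (funDep_pi fun (a : {a // a ∈ A j}) => ?_).trans (hA j)
      obtain ⟨a, ha⟩ := a
      obtain rfl : a = b0' := by simpa [hAj] using ha
      exact funDep_refl _
    exact funDep_of_condIndep hCI (funDep_refl _) hdep
  · intro hR Ω μ X hfin hBN1 hBN2
    exact condIndep_y_of_funDep_classY hBN1 hb0 hb0'b <|
      hR Ω μ (classY μ X) (finSupp_classY hfin)
        (mutIndepOn_classY fun _ hi => indep_y_edge1 hBN1 hi)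
        (mutIndepOn_classY fun _ hi => indep_y_edge2 hBN2 hi)
        fun j => funDep_classY_of_parents hBN1 hBN2 (hb j)

/-- Theorem 10 of the paper: Networks 1 and 2 imply the conditional independency
`Y_{b_0} ⊥⊥ Y_{b_0'} | Y_{A_0}` (with `A_0 = {a_0}`) if and only if the implication of
Corollary 8 holds: every tuple `V_1,…,V_n` of finitely supported random variables with
`(V_i)_{i ∈ C1}` mutually independent, `(V_i)_{i ∈ C2}` mutually independent, and
`V_{b_j} ≤ι V_{A_j}` for `j = 1,…,k`, satisfies `V_{b_0} ≤ι V_{a_0}`. -/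
theorem networks_CI_iff_implication (n k : ℕ) (hn : 2 ≤ n) (hk : 1 ≤ k)
    (C1 C2 : Finset (Fin n)) (hC : Disjoint C1 C2)
    (A : Fin k → Finset (Fin n)) (b : Fin k → Fin n) (hb : ∀ j, b j ∉ A j)
    (a0 b0 b0' : Fin n)
    (hb0 : b0 ≠ a0) (hb0'a : b0' ≠ a0) (hb0'b : b0' ≠ b0)
    (hentry1 : ∃ j : Fin k, A j = {b0} ∧ b j = b0')
    (hentry2 : ∃ j : Fin k, A j = {b0'} ∧ b j = b0) :
    (∀ (Ω : Type) (μ : PMF Ω) (X : BNode n k → Ω → ℕ),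
        (∀ v, FinSupp μ (X v)) →
        SatisfiesBN μ X (edge1 n k C1) →
        SatisfiesBN μ X (edge2 n k C2 A b) →
        CondIndep μ (X (.y b0)) (X (.y b0')) (X (.y a0))) ↔
    (∀ (Ω : Type) (μ : PMF Ω) (V : Fin n → Ω → ℕ),
        (∀ i, FinSupp μ (V i)) →
        MutIndepOn μ V C1 → MutIndepOn μ V C2 →
        (∀ j : Fin k, FunDep μ (jointFin V (A j)) (V (b j))) →
        FunDep μ (V a0) (V b0)) :=
  networks_CI_iff_implication_general n k hk C1 C2 A b hb a0 b0 b0' hb0 hb0'b hentry2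

end Paper
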